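/- arXiv:1006.5704 — 2 statements merged into one kernel-verified Lean document; each statement's English description precedes it below -/
import Mathlib

section
/- With the setup described in the context (initial society determined by the interval function I, friendship within list-distance s−1, and the C_j coming from a First-Fit chain partition extended by empty chains), for every index i with 0 ≤ i ≤ n we have ⋃_{X ∈ S_i} X ⊇ ⋃_{j > i} C_j; that is, every element of P that lies in a chain C_j with j > i belongs to some group of S_i. -/
/-!
Induction on `i`. For `y ∈ C j` with `j > i + 1`, First-Fit gives `z ∈ C (i + 1)` incomparable
to `y`, and by induction both lie in groups of `S i`. These groups are level sets
`{x | k ∈ I x}` with `k` increasing along the list. Take a closest pair of positions carrying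
`y` and `z`: if they were more than `s - 1` apart, the groups strictly between them contain
neither, so their levels are `s - 1` integers strictly between the intervals `I y` and `I z`
(which are then disjoint), contradicting property (2). Hence the group carrying `y` is within
distance `s - 1` of a group meeting `C (i + 1)`, and survives by an α- or β-transition.
-/

open scoped Classical

/-- `X` makes a transition of type α from `S (j-1)` to `S j`:
`X` belongs to the list `S (j-1)` and has non-empty intersection with the chain `C j`. -/
def TransAlpha {α : Type*} (S : ℕ → List (Set α)) (C : ℕ → Set α)
    (j : ℕ) (X : Set α) : Prop :=
  X ∈ S (j - 1) ∧ (X ∩ C j).Nonempty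

/-- `X` makes a transition of type β from `S (j-1)` to `S j`:
condition α fails, but some friend of `X` in the `t`-society `(S (j-1), F (j-1))`
has non-empty intersection with `C j`. -/
def TransBeta {α : Type*} (S : ℕ → List (Set α)) (F : ℕ → Set α → ℕ → Option (Set α))
    (C : ℕ → Set α) (t j : ℕ) (X : Set α) : Prop :=
  X ∈ S (j - 1) ∧ ¬ (X ∩ C j).Nonempty ∧
    ∃ k < t, ∃ Y, F (j - 1) X k = some Y ∧ (Y ∩ C j).Nonempty

/-- `N^α_{i,j}(X)`: the number of indices `l` with `i < l ≤ j` such that `X` makes a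
transition of type α from `S (l-1)` to `S l`. -/
noncomputable def NAlpha {α : Type*} (S : ℕ → List (Set α)) (C : ℕ → Set α)
    (i j : ℕ) (X : Set α) : ℕ :=
  ((Finset.Ioc i j).filter fun l => TransAlpha S C l X).card

/-- `X` makes a transition of type γ from `S (j-1)` to `S j`:
conditions α and β fail, but there is `i ≤ j - 1` with `N^α_{i,j-1}(X) > ε (j - i)`,
where `ε = 1 / (2 t)`. -/
def TransGamma {α : Type*} (S : ℕ → List (Set α)) (F : ℕ → Set α → ℕ → Option (Set α))
    (C : ℕ → Set α) (t j : ℕ) (X : Set α) : Prop :=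
  X ∈ S (j - 1) ∧ ¬ (X ∩ C j).Nonempty ∧
    ¬ (∃ k < t, ∃ Y, F (j - 1) X k = some Y ∧ (Y ∩ C j).Nonempty) ∧
    ∃ i ≤ j - 1, (NAlpha S C i (j - 1) X : ℝ) > (1 / (2 * (t : ℝ))) * ((j : ℝ) - (i : ℝ))

namespace Set.OrdConnected

variable {β : Type*} [LinearOrder β] {s : Set β} {u k : β}

theorem forall_lt_of_notMem (hs : s.OrdConnected) (hu : u ∈ s) (huk : u ≤ k) (hk : k ∉ s) :
    ∀ a ∈ s, a < k :=
  fun _ ha => lt_of_not_ge fun hka => hk (hs.out hu ha ⟨huk, hka⟩)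

theorem forall_gt_of_notMem (hs : s.OrdConnected) (hu : u ∈ s) (hku : k ≤ u) (hk : k ∉ s) :
    ∀ a ∈ s, k < a :=
  fun _ ha => lt_of_not_ge fun hak => hk (hs.out ha hu ⟨hak, hku⟩)

end Set.OrdConnected

section GapSet

variable {β : Type*} [LinearOrder β] {A B : Set β}

def gapSet (A B : Set β) : Set β :=
  {k | ((∀ a ∈ A, a < k) ∧ ∀ b ∈ B, k < b) ∨ ((∀ b ∈ B, b < k) ∧ ∀ a ∈ A, k < a)}

theorem gapSet_comm (A B : Set β) : gapSet A B = gapSet B A :=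
  Set.ext fun _ => or_comm

theorem disjoint_of_mem_gapSet {k : β} (hk : k ∈ gapSet A B) : Disjoint A B :=
  Set.disjoint_left.mpr fun a haA haB => by
    rcases hk with ⟨h₁, h₂⟩ | ⟨h₁, h₂⟩
    · exact (h₁ a haA).not_gt (h₂ a haB)
    · exact (h₁ a haB).not_gt (h₂ a haA)

theorem gapSet_finite [LocallyFiniteOrderBot β] {u v : β} (hu : u ∈ A) (hv : v ∈ B) :
    (gapSet A B).Finite :=
  (Set.finite_Iio (max u v)).subset fun _ hk => by
    rcases hk with ⟨-, h⟩ | ⟨-, h⟩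
    · exact lt_max_of_lt_right (h v hv)
    · exact lt_max_of_lt_left (h u hu)

end GapSet

section Levels

variable {β : Type*} [LinearOrder β] [LocallyFiniteOrderBot β] {ℓ : ℕ → β} {A B : Set β}
  {a b d : ℕ}

theorem disjoint_and_le_ncard_gapSet (hℓ : StrictMono ℓ) (hA : A.OrdConnected)
    (hB : B.OrdConnected) (hd : 1 ≤ d) (hab : a + d < b) (ha : ℓ a ∈ A) (hb : ℓ b ∈ B)
    (hmid : ∀ p, a < p → p < b → ℓ p ∉ A ∧ ℓ p ∉ B) :
    Disjoint A B ∧ d ≤ (gapSet A B).ncard := by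
  have hgap : ∀ p, a < p → p < b → ℓ p ∈ gapSet A B := fun p hap hpb =>
    Or.inl ⟨hA.forall_lt_of_notMem ha (hℓ hap).le (hmid p hap hpb).1,
      hB.forall_gt_of_notMem hb (hℓ hpb).le (hmid p hap hpb).2⟩
  refine ⟨disjoint_of_mem_gapSet (hgap (a + 1) (by omega) (by omega)), ?_⟩
  calc d ≤ ((Finset.Ioo a b).image ℓ).card := by
        rw [Finset.card_image_of_injective _ hℓ.injective, Nat.card_Ioo]; omega
    _ = ((Finset.Ioo a b).image ℓ : Set β).ncard := (Set.ncard_coe_finset _).symm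
    _ ≤ (gapSet A B).ncard := by
        refine Set.ncard_le_ncard ?_ (gapSet_finite ha hb)
        intro k hk
        obtain ⟨p, hp, rfl⟩ := Finset.mem_image.mp hk
        exact hgap p (Finset.mem_Ioo.mp hp).1 (Finset.mem_Ioo.mp hp).2

theorem exists_near_or_disjoint_and_le_ncard_gapSet (hℓ : StrictMono ℓ) (hA : A.OrdConnected)
    (hB : B.OrdConnected) (hd : 1 ≤ d) {N : ℕ} (ha : a < N) (hb : b < N) (hla : ℓ a ∈ A)
    (hlb : ℓ b ∈ B) :
    (∃ a' < N, ∃ b' < N, ℓ a' ∈ A ∧ ℓ b' ∈ B ∧ a' ≤ b' + d ∧ b' ≤ a' + d) ∨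
      (Disjoint A B ∧ d ≤ (gapSet A B).ncard) := by
  -- a position strictly between `a` and `b` with label in `A` (resp. `B`) replaces `a` (resp. `b`)
  induction hD : a - b + (b - a) using Nat.strong_induction_on generalizing a b with
  | _ D ih =>
  by_cases hnear : a ≤ b + d ∧ b ≤ a + d
  · exact Or.inl ⟨a, ha, b, hb, hla, hlb, hnear⟩
  by_cases hmid : ∃ p, min a b < p ∧ p < max a b ∧ (ℓ p ∈ A ∨ ℓ p ∈ B)
  · obtain ⟨p, hp₁, hp₂, hpA | hpB⟩ := hmid
    · exact ih _ (by omega) (by omega) hb hpA hlb rfl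
    · exact ih _ (by omega) ha (by omega) hla hpB rfl
  push Not at hmid
  rcases Nat.lt_or_gt_of_ne (show a ≠ b by omega) with hab | hba
  · exact Or.inr (disjoint_and_le_ncard_gapSet hℓ hA hB hd (by omega) hla hlb
      fun p h₁ h₂ => hmid p (by omega) (by omega))
  · obtain ⟨hdisj, hcard⟩ := disjoint_and_le_ncard_gapSet hℓ hB hA hd (by omega) hlb hla
      fun p h₁ h₂ => (hmid p (by omega) (by omega)).symm
    exact Or.inr ⟨hdisj.symm, gapSet_comm A B ▸ hcard⟩

theorem exists_near_of_getElem_eq_levelSet {α : Type*} {L : List (Set α)} {J : α → Set β}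
    (hℓ : StrictMono ℓ) (hL : ∀ p (hp : p < L.length), L[p] = {x | ℓ p ∈ J x})
    (hJ : ∀ x, (J x).OrdConnected) {s : ℕ} (hs : 2 ≤ s) {y z : α}
    (hyz : (J y ∩ J z).Nonempty ∨ (gapSet (J y) (J z)).ncard ≤ s - 2)
    {Y Z : Set α} (hY : Y ∈ L) (hy : y ∈ Y) (hZ : Z ∈ L) (hz : z ∈ Z) :
    ∃ a b : ℕ, ∃ (ha : a < L.length) (hb : b < L.length),
      y ∈ L[a] ∧ z ∈ L[b] ∧ a ≤ b + (s - 1) ∧ b ≤ a + (s - 1) := by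
  obtain ⟨a, ha, rfl⟩ := List.getElem_of_mem hY
  obtain ⟨b, hb, rfl⟩ := List.getElem_of_mem hZ
  rw [hL] at hy hz
  rcases exists_near_or_disjoint_and_le_ncard_gapSet (d := s - 1) hℓ (hJ y) (hJ z) (by omega)
    ha hb hy hz with ⟨a', ha', b', hb', hya, hzb, hnear⟩ | ⟨hdisj, hcard⟩
  · exact ⟨a', b', ha', hb', by rw [hL]; exact hya, by rw [hL]; exact hzb, hnear⟩
  · rcases hyz with hne | hle
    · exact absurd hdisj (Set.not_disjoint_iff_nonempty_inter.mpr hne)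
    · omega

end Levels

theorem exists_strictMono_getElem_eq_of_sublist_map_range {γ : Type*} {g : ℕ → γ}
    {L : List γ} {q : ℕ} (h : L.Sublist ((List.range q).map g)) :
    ∃ ℓ : ℕ → ℕ, StrictMono ℓ ∧ ∀ p (hp : p < L.length), L[p] = g (ℓ p) := by
  obtain ⟨f, hf⟩ := List.sublist_iff_exists_orderEmbedding_getElem?_eq.mp h
  refine ⟨f, f.strictMono, fun p hp => ?_⟩
  have hfp := hf p
  rw [List.getElem?_eq_getElem hp, eq_comm, List.getElem?_eq_some_iff] at hfp
  obtain ⟨_, he⟩ := hfp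
  simpa using he.symm

theorem exists_mem_map_range_levelSet {α : Type*} {I : α → Finset ℕ} {q : ℕ} {y : α}
    (hne : (I y).Nonempty) (hsub : I y ⊆ Finset.Icc 1 q) :
    ∃ X ∈ (List.range q).map fun k => {x : α | k + 1 ∈ I x}, y ∈ X := by
  obtain ⟨k, hk⟩ := hne
  have hkq := Finset.mem_Icc.mp (hsub hk)
  refine ⟨{x | k ∈ I x}, List.mem_map.mpr ⟨k - 1, List.mem_range.mpr (by omega), ?_⟩, hk⟩
  rw [Nat.sub_add_cancel hkq.1]

theorem mem_succ_of_near_getElem {α : Type*} {S : ℕ → List (Set α)}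
    {F : ℕ → Set α → ℕ → Option (Set α)} {C : ℕ → Set α} {t s i : ℕ}
    (hstay : ∀ X ∈ S i, TransAlpha S C (i + 1) X ∨ TransBeta S F C t (i + 1) X → X ∈ S (i + 1))
    (hfriend : ∀ p₁ p₂ : ℕ, p₁ < p₂ → p₂ - p₁ ≤ s - 1 →
      ∀ Y Z : Set α, (S i)[p₁]? = some Y → (S i)[p₂]? = some Z → Y ≠ Z →
        (∃ k < t, F i Y k = some Z) ∧ (∃ k < t, F i Z k = some Y))
    {a b : ℕ} (ha : a < (S i).length) (hb : b < (S i).length) (hab : a ≤ b + (s - 1))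
    (hba : b ≤ a + (s - 1)) (hC : ((S i)[b] ∩ C (i + 1)).Nonempty) :
    (S i)[a] ∈ S (i + 1) := by
  have hmem := List.getElem_mem ha
  by_cases hα : ((S i)[a] ∩ C (i + 1)).Nonempty
  · exact hstay _ hmem (Or.inl ⟨hmem, hα⟩)
  have hne : (S i)[a] ≠ (S i)[b] := fun h => hα (h ▸ hC)
  obtain ⟨k, hk, hF⟩ : ∃ k < t, F i (S i)[a] k = some (S i)[b] := by
    rcases Nat.lt_or_gt_of_ne (fun h : a = b => hne (by subst h; rfl)) with h | h
    · exact (hfriend a b h (by omega) _ _ (List.getElem?_eq_getElem ha)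
        (List.getElem?_eq_getElem hb) hne).1
    · exact (hfriend b a h (by omega) _ _ (List.getElem?_eq_getElem hb)
        (List.getElem?_eq_getElem ha) hne.symm).2
  exact hstay _ hmem (Or.inr ⟨hmem, hα, k, hk, _, hF, hC⟩)

theorem union_groups_superset_union_later_chains_general
    {α : Type*} [PartialOrder α]
    (s q m n : ℕ) (t : ℕ) (hs : 2 ≤ s)
    -- `C 1, …, C m` is a First-Fit chain partition of `P`, and `C j = ∅` for `j > m`
    (C : ℕ → Set α)
    (hFF : ∀ i j, 1 ≤ i → i < j → j ≤ m → ∀ x ∈ C j, ∃ z ∈ C i, ¬ x ≤ z ∧ ¬ z ≤ x)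
    (hCempty : ∀ j, m < j → C j = ∅)
    -- `I` assigns to each `x ∈ P` a non-empty set `I x ⊆ {1, …, q}` of consecutive
    -- integers with properties (1) and (2) of the structural lemma
    (I : α → Finset ℕ)
    (hIne : ∀ x, (I x).Nonempty)
    (hIsub : ∀ x, I x ⊆ Finset.Icc 1 q)
    (hIcons : ∀ x, ∃ a b : ℕ, I x = Finset.Icc a b)
    (hIgap : ∀ x y : α, ¬ x ≤ y → ¬ y ≤ x →
      (I x ∩ I y).Nonempty ∨
      Set.ncard {k : ℕ |
        ((∀ a ∈ I x, a < k) ∧ (∀ b ∈ I y, k < b)) ∨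
        ((∀ b ∈ I y, b < k) ∧ (∀ a ∈ I x, k < a))} ≤ s - 2)
    -- the evolution `(S 0, F 0), …, (S n, F n)` of `t`-societies
    (S : ℕ → List (Set α)) (F : ℕ → Set α → ℕ → Option (Set α))
    -- `S 0` is the list `X 1, …, X q`, where `X k = {x | k ∈ I x}`
    (hS0 : S 0 = (List.range q).map fun k => {x : α | k + 1 ∈ I x})
    -- each `S j` is a sublist of `S 0` (retaining the order of `S 0`), and the lists decrease
    (hsub : ∀ j, j ≤ n → (S j).Sublist (S 0))
    -- a group of `S (j-1)` belongs to `S j` iff it makes a transition of type α, β or γ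
    (hrule : ∀ j, 1 ≤ j → j ≤ n → ∀ X ∈ S (j - 1),
      (X ∈ S j ↔ TransAlpha S C j X ∨ TransBeta S F C t j X ∨ TransGamma S F C t j X))
    -- distinct groups of `S j` at list-distance at most `s - 1` list each other as friends
    (hfriend : ∀ j, j ≤ n → ∀ p₁ p₂ : ℕ, p₁ < p₂ → p₂ - p₁ ≤ s - 1 →
      ∀ Y Z : Set α, (S j)[p₁]? = some Y → (S j)[p₂]? = some Z → Y ≠ Z →
        (∃ k < t, F j Y k = some Z) ∧ (∃ k < t, F j Z k = some Y))
    :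
    ∀ i, i ≤ n → ∀ j, i < j → ∀ y ∈ C j, ∃ X ∈ S i, y ∈ X := by
  intro i
  induction i with
  | zero => exact fun _ _ _ y _ => hS0 ▸ exists_mem_map_range_levelSet (hIne y) (hIsub y)
  | succ i ih =>
    intro hi j hij y hy
    have hjm : j ≤ m := not_lt.mp fun h => by simp [hCempty j h] at hy
    obtain ⟨z, hz, hyz, hzy⟩ := hFF (i + 1) j (by omega) hij hjm y hy
    obtain ⟨Y, hY, hyY⟩ := ih (by omega) j (by omega) y hy
    obtain ⟨Z, hZ, hzZ⟩ := ih (by omega) (i + 1) (by omega) z hz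
    obtain ⟨ℓ, hℓ, hL⟩ := exists_strictMono_getElem_eq_of_sublist_map_range
      (hS0 ▸ hsub i (by omega))
    have hI : ∀ x, (I x : Set ℕ).OrdConnected := fun x => by
      obtain ⟨a, b, hab⟩ := hIcons x
      rw [hab, Finset.coe_Icc]
      exact Set.ordConnected_Icc
    obtain ⟨a, b, ha, hb, hya, hzb, hab, hba⟩ :=
      exists_near_of_getElem_eq_levelSet (J := fun x => (I x : Set ℕ)) (hℓ.add_const 1) hL hI hs
        ((hIgap y z hyz hzy).imp_left (by exact_mod_cast ·)) hY hyY hZ hzZ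
    have hstay : ∀ X ∈ S i, TransAlpha S C (i + 1) X ∨ TransBeta S F C t (i + 1) X →
        X ∈ S (i + 1) := fun X hX hαβ =>
      (hrule (i + 1) (by omega) hi X hX).mpr (hαβ.imp_right Or.inl)
    exact ⟨_, mem_succ_of_near_getElem hstay (hfriend i (by omega)) ha hb hab hba ⟨z, hzb, hz⟩,
      hya⟩

/-- **Lemma 5 (coverage).**  With the initial society determined by the interval function `I`,
friendship within list-distance `s - 1`, and the `C j` coming from a First-Fit chain partition
extended by empty chains: for every `i ≤ n`, every element of `P` lying in a chain `C j` with
`j > i` belongs to some group of `S i`, i.e. `⋃_{X ∈ S i} X ⊇ ⋃_{j > i} C j`. -/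
theorem union_groups_superset_union_later_chains
    {α : Type*} [PartialOrder α] [Fintype α]
    (r s q m n : ℕ) (t : ℕ) (hr : 2 ≤ r) (hs : 2 ≤ s) (ht : t = 2 * (s - 1))
    -- `P` is `(𝐫 + 𝐬)`-free
    (hfree : ¬ ∃ A B : Finset α, A.card = r ∧ B.card = s ∧ Disjoint A B ∧
      IsChain (· ≤ ·) (A : Set α) ∧ IsChain (· ≤ ·) (B : Set α) ∧
      ∀ a ∈ A, ∀ b ∈ B, ¬ a ≤ b ∧ ¬ b ≤ a)
    -- `q` is the height of `P`
    (hq : IsGreatest {k | ∃ c : Finset α, c.card = k ∧ IsChain (· ≤ ·) (c : Set α)} q)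
    -- `C 1, …, C m` is a First-Fit chain partition of `P`, and `C j = ∅` for `j > m`
    (C : ℕ → Set α)
    (hCne : ∀ j, 1 ≤ j → j ≤ m → (C j).Nonempty)
    (hCchain : ∀ j, 1 ≤ j → j ≤ m → IsChain (· ≤ ·) (C j))
    (hCdisj : ∀ i j, 1 ≤ i → j ≤ m → i ≠ j → Disjoint (C i) (C j))
    (hCcover : ∀ x : α, ∃ j, 1 ≤ j ∧ j ≤ m ∧ x ∈ C j)
    (hFF : ∀ i j, 1 ≤ i → i < j → j ≤ m → ∀ x ∈ C j, ∃ z ∈ C i, ¬ x ≤ z ∧ ¬ z ≤ x)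
    (hCempty : ∀ j, m < j → C j = ∅)
    -- `I` assigns to each `x ∈ P` a non-empty set `I x ⊆ {1, …, q}` of consecutive
    -- integers with properties (1) and (2) of the structural lemma
    (I : α → Finset ℕ)
    (hIne : ∀ x, (I x).Nonempty)
    (hIsub : ∀ x, I x ⊆ Finset.Icc 1 q)
    (hIcons : ∀ x, ∃ a b : ℕ, I x = Finset.Icc a b)
    (hIheight : ∀ k : ℕ, ∀ c : Finset α, (∀ x ∈ c, k ∈ I x) →
      IsChain (· ≤ ·) (c : Set α) → c.card ≤ r - 1)
    (hIgap : ∀ x y : α, ¬ x ≤ y → ¬ y ≤ x →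
      (I x ∩ I y).Nonempty ∨
      Set.ncard {k : ℕ |
        ((∀ a ∈ I x, a < k) ∧ (∀ b ∈ I y, k < b)) ∨
        ((∀ b ∈ I y, b < k) ∧ (∀ a ∈ I x, k < a))} ≤ s - 2)
    -- the evolution `(S 0, F 0), …, (S n, F n)` of `t`-societies
    (S : ℕ → List (Set α)) (F : ℕ → Set α → ℕ → Option (Set α))
    -- `S 0` is the list `X 1, …, X q`, where `X k = {x | k ∈ I x}`
    (hS0 : S 0 = (List.range q).map fun k => {x : α | k + 1 ∈ I x})
    -- each `S j` is a sublist of `S 0` (retaining the order of `S 0`), and the lists decrease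
    (hsub : ∀ j, j ≤ n → (S j).Sublist (S 0))
    (hmono : ∀ j, 1 ≤ j → j ≤ n → (S j).Sublist (S (j - 1)))
    -- a group of `S (j-1)` belongs to `S j` iff it makes a transition of type α, β or γ
    (hrule : ∀ j, 1 ≤ j → j ≤ n → ∀ X ∈ S (j - 1),
      (X ∈ S j ↔ TransAlpha S C j X ∨ TransBeta S F C t j X ∨ TransGamma S F C t j X))
    -- distinct groups of `S j` at list-distance at most `s - 1` list each other as friends
    (hfriend : ∀ j, j ≤ n → ∀ p₁ p₂ : ℕ, p₁ < p₂ → p₂ - p₁ ≤ s - 1 →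
      ∀ Y Z : Set α, (S j)[p₁]? = some Y → (S j)[p₂]? = some Z → Y ≠ Z →
        (∃ k < t, F j Y k = some Z) ∧ (∃ k < t, F j Z k = some Y))
    :
    ∀ i, i ≤ n → ∀ j, i < j → ∀ y ∈ C j, ∃ X ∈ S i, y ∈ X :=
  union_groups_superset_union_later_chains_general s q m n t hs C hFF hCempty I hIne hIsub hIcons
    hIgap S F hS0 hsub hrule hfriend
end

section
/- With the setup described in the context (initial society determined by the interval function I, friendship within list-distance s−1, the C_j coming from a First-Fit chain partition extended by empty chains, P non-empty, and S_n = ∅), the length of the evolution satisfies n ≥ m + 2. -/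
open scoped Classical

/-!
Every element of a chain `C l` with `l ≥ j` still lies in some group of `S j`, as long as
`j ≤ m`. Indeed, if `x ∈ C l` with `l > j + 1`, First-Fit gives `z ∈ C (j + 1)` incomparable
to `x`. Take groups of `S j` containing `x` and `z` at closest positions: the groups strictly
between them contain neither, and since `S j` lists some of the `X k` in increasing order of
`k` and `I x`, `I z` are intervals, their indices lie in the gap between `I x` and `I z`. That
gap has at most `s - 2` integers, so the two groups are friends, and the group of `x` survives
by an α- or β-transition. Hence `S n` is non-empty for `n ≤ m`. For `n = m + 1`, a group
containing an element of `C m` makes an α-transition at step `m` and a γ-transition at step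
`m + 1`, because `N^α_{m-1,m} = 1 > 2ε`.
-/

def gapBetween {β : Type*} [LT β] (A B : Set β) : Set β :=
  {k | ((∀ a ∈ A, a < k) ∧ (∀ b ∈ B, k < b)) ∨ ((∀ b ∈ B, b < k) ∧ (∀ a ∈ A, k < a))}

section Gap

variable {β : Type*}

theorem gapBetween_comm [LT β] (A B : Set β) : gapBetween A B = gapBetween B A :=
  Set.ext fun _ => or_comm

theorem gapBetween_eq_empty_of_inter_nonempty [Preorder β] {A B : Set β}
    (h : (A ∩ B).Nonempty) : gapBetween A B = ∅ := by
  obtain ⟨c, hcA, hcB⟩ := h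
  refine Set.eq_empty_of_forall_notMem fun k hk => ?_
  rcases hk with ⟨hA, hB⟩ | ⟨hB, hA⟩ <;> exact lt_asymm (hA c hcA) (hB c hcB)

theorem mem_gapBetween_of_lt_of_lt [LinearOrder β] {A B : Set β} (hA : A.OrdConnected)
    (hB : B.OrdConnected) {a b k : β} (ha : a ∈ A) (hb : b ∈ B) (hak : a < k) (hkb : k < b)
    (hkA : k ∉ A) (hkB : k ∉ B) : k ∈ gapBetween A B :=
  Or.inl ⟨fun _ ha' => lt_of_not_ge fun h => hkA (hA.out ha ha' ⟨hak.le, h⟩),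
    fun _ hb' => lt_of_not_ge fun h => hkB (hB.out hb' hb ⟨h, hkb.le⟩)⟩

end Gap

theorem gapBetween_finite {A B : Set ℕ} {a b : ℕ} (ha : a ∈ A) (hb : b ∈ B) :
    (gapBetween A B).Finite := by
  refine (Set.finite_Iio (a + b)).subset fun k hk => ?_
  rcases hk with ⟨-, h⟩ | ⟨-, h⟩
  · exact Set.mem_Iio.mpr ((h b hb).trans_le (Nat.le_add_left b a))
  · exact Set.mem_Iio.mpr ((h a ha).trans_le (Nat.le_add_right a b))

theorem le_add_ncard_gapBetween {e : ℕ → ℕ} (he : StrictMono e) {A B : Set ℕ}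
    (hA : A.OrdConnected) (hB : B.OrdConnected) {a b : ℕ} (hab : a < b) (ha : e a ∈ A)
    (hb : e b ∈ B) (hbetween : ∀ c, a < c → c < b → e c ∉ A ∧ e c ∉ B) :
    b ≤ a + (gapBetween A B).ncard + 1 := by
  have hmaps : ∀ c ∈ Set.Ioo a b, e c ∈ gapBetween A B := fun c hc =>
    mem_gapBetween_of_lt_of_lt hA hB ha hb (he hc.1) (he hc.2)
      (hbetween c hc.1 hc.2).1 (hbetween c hc.1 hc.2).2
  have hle := Set.ncard_le_ncard_of_injOn e hmaps he.injective.injOn (gapBetween_finite ha hb)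
  rw [← Finset.coe_Ioo, Set.ncard_coe_finset, Nat.card_Ioo] at hle
  omega

theorem exists_closest_pair {P Q : ℕ → Prop} (hP : ∃ a, P a) (hQ : ∃ b, Q b) :
    ∃ a b, P a ∧ Q b ∧ ∀ c, min a b < c → c < max a b → ¬ P c ∧ ¬ Q c := by
  obtain ⟨a₀, ha₀⟩ := hP
  obtain ⟨b₀, hb₀⟩ := hQ
  have h : ∃ d a b, P a ∧ Q b ∧ Nat.dist a b = d := ⟨_, a₀, b₀, ha₀, hb₀, rfl⟩
  obtain ⟨a, b, ha, hb, hd⟩ := Nat.find_spec h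
  refine ⟨a, b, ha, hb, fun c h₁ h₂ => ⟨fun hc => ?_, fun hc => ?_⟩⟩
  · have := Nat.find_min' h ⟨c, b, hc, hb, rfl⟩
    simp only [Nat.dist] at hd this
    omega
  · have := Nat.find_min' h ⟨a, c, ha, hc, rfl⟩
    simp only [Nat.dist] at hd this
    omega

section Positions

variable {α : Type*} {L : List (Set α)} {x z : α} {A B : Set ℕ} {e : ℕ → ℕ}

theorem exists_close_positions (he : StrictMono e) (hA : A.OrdConnected) (hB : B.OrdConnected)
    (hxA : ∀ p (hp : p < L.length), x ∈ L[p] ↔ e p ∈ A)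
    (hzB : ∀ p (hp : p < L.length), z ∈ L[p] ↔ e p ∈ B)
    (hx : ∃ Y ∈ L, x ∈ Y) (hz : ∃ Z ∈ L, z ∈ Z) :
    ∃ p₁ p₂, ∃ (h₁ : p₁ < L.length) (h₂ : p₂ < L.length), x ∈ L[p₁] ∧ z ∈ L[p₂] ∧
      p₁ ≤ p₂ + (gapBetween A B).ncard + 1 ∧ p₂ ≤ p₁ + (gapBetween A B).ncard + 1 := by
  have hpos : ∀ w, (∃ Y ∈ L, w ∈ Y) → ∃ p, ∃ hp : p < L.length, w ∈ L[p] := by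
    rintro w ⟨Y, hY, hwY⟩
    obtain ⟨p, hp, rfl⟩ := List.mem_iff_getElem.mp hY
    exact ⟨p, hp, hwY⟩
  obtain ⟨p₁, p₂, ⟨h₁, hx₁⟩, ⟨h₂, hz₂⟩, hbetween⟩ := exists_closest_pair (hpos x hx) (hpos z hz)
  refine ⟨p₁, p₂, h₁, h₂, hx₁, hz₂, ?_⟩
  have hout : ∀ c, min p₁ p₂ < c → c < max p₁ p₂ → e c ∉ A ∧ e c ∉ B := by
    intro c hc₁ hc₂
    have hc : c < L.length := by omega
    exact ⟨fun h => (hbetween c hc₁ hc₂).1 ⟨hc, (hxA c hc).2 h⟩,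
      fun h => (hbetween c hc₁ hc₂).2 ⟨hc, (hzB c hc).2 h⟩⟩
  rcases lt_trichotomy p₁ p₂ with h | rfl | h
  · have := le_add_ncard_gapBetween he hA hB h ((hxA p₁ h₁).1 hx₁) ((hzB p₂ h₂).1 hz₂)
      fun c hc₁ hc₂ => hout c (by omega) (by omega)
    omega
  · omega
  · have := le_add_ncard_gapBetween he hB hA h ((hzB p₂ h₂).1 hz₂) ((hxA p₁ h₁).1 hx₁)
      fun c hc₁ hc₂ => (hout c (by omega) (by omega)).symm
    rw [gapBetween_comm] at this
    omega

theorem exists_mem_and_mem_or_friend_mem {G : Set α → ℕ → Option (Set α)} {t d : ℕ}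
    (he : StrictMono e) (hA : A.OrdConnected) (hB : B.OrdConnected)
    (hxA : ∀ p (hp : p < L.length), x ∈ L[p] ↔ e p ∈ A)
    (hzB : ∀ p (hp : p < L.length), z ∈ L[p] ↔ e p ∈ B)
    (hgap : (gapBetween A B).ncard + 1 ≤ d)
    (hfriend : ∀ p₁ p₂ : ℕ, p₁ < p₂ → p₂ - p₁ ≤ d →
      ∀ Y Z : Set α, L[p₁]? = some Y → L[p₂]? = some Z → Y ≠ Z →
        (∃ k < t, G Y k = some Z) ∧ (∃ k < t, G Z k = some Y))
    (hx : ∃ Y ∈ L, x ∈ Y) (hz : ∃ Z ∈ L, z ∈ Z) :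
    ∃ Y ∈ L, x ∈ Y ∧ (z ∈ Y ∨ ∃ k < t, ∃ Z, G Y k = some Z ∧ z ∈ Z) := by
  obtain ⟨p₁, p₂, h₁, h₂, hx₁, hz₂, hle₁, hle₂⟩ :=
    exists_close_positions he hA hB hxA hzB hx hz
  refine ⟨L[p₁], List.getElem_mem h₁, hx₁, ?_⟩
  by_cases hYZ : L[p₁] = L[p₂]
  · exact Or.inl (hYZ ▸ hz₂)
  have hp : p₁ ≠ p₂ := by rintro rfl; exact hYZ rfl
  rcases hp.lt_or_gt with h | h
  · obtain ⟨⟨k, hk, hG⟩, -⟩ := hfriend p₁ p₂ h (by omega) _ _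
      (List.getElem?_eq_getElem h₁) (List.getElem?_eq_getElem h₂) hYZ
    exact Or.inr ⟨k, hk, _, hG, hz₂⟩
  · obtain ⟨-, ⟨k, hk, hG⟩⟩ := hfriend p₂ p₁ h (by omega) _ _
      (List.getElem?_eq_getElem h₂) (List.getElem?_eq_getElem h₁) (Ne.symm hYZ)
    exact Or.inr ⟨k, hk, _, hG, hz₂⟩

end Positions

theorem exists_strictMono_of_sublist_map_range {γ : Type*} {g : ℕ → γ} {L : List γ} {q : ℕ}
    (h : L.Sublist ((List.range q).map g)) :
    ∃ e : ℕ → ℕ, StrictMono e ∧ ∀ p (hp : p < L.length), L[p] = g (e p) := by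
  obtain ⟨f, hf⟩ := List.sublist_iff_exists_orderEmbedding_getElem?_eq.mp h
  refine ⟨f, f.strictMono, fun p hp => ?_⟩
  have hfp := hf p
  rw [List.getElem?_eq_getElem hp, List.getElem?_map] at hfp
  by_cases hq : f p < q
  · rw [List.getElem?_range hq] at hfp
    exact Option.some.inj hfp
  · rw [List.getElem?_eq_none (by simpa using hq)] at hfp
    cases hfp

theorem exists_mem_map_range {α : Type*} {I : α → Finset ℕ} {q k : ℕ} {x : α} (hk : k ∈ I x)
    (hk₁ : 1 ≤ k) (hkq : k ≤ q) :
    ∃ Y ∈ (List.range q).map (fun k => {y : α | k + 1 ∈ I y}), x ∈ Y := by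
  refine ⟨_, List.mem_map_of_mem (List.mem_range.mpr (show k - 1 < q by omega)), ?_⟩
  change k - 1 + 1 ∈ I x
  rwa [Nat.sub_add_cancel hk₁]

section Evolution

variable {α : Type*} {S : ℕ → List (Set α)} {F : ℕ → Set α → ℕ → Option (Set α)}
  {C : ℕ → Set α} {t n : ℕ}

theorem mem_succ_of_mem_or_friend_mem
    (hrule : ∀ j, 1 ≤ j → j ≤ n → ∀ X ∈ S (j - 1),
      TransAlpha S C j X ∨ TransBeta S F C t j X ∨ TransGamma S F C t j X → X ∈ S j)
    {j : ℕ} (hjn : j + 1 ≤ n) {Y : Set α} (hY : Y ∈ S j)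
    (h : (Y ∩ C (j + 1)).Nonempty ∨
      ∃ k < t, ∃ Z, F j Y k = some Z ∧ (Z ∩ C (j + 1)).Nonempty) :
    Y ∈ S (j + 1) := by
  by_cases hα : (Y ∩ C (j + 1)).Nonempty
  · exact hrule (j + 1) (by omega) hjn Y hY (Or.inl ⟨hY, hα⟩)
  · exact hrule (j + 1) (by omega) hjn Y hY (Or.inr (Or.inl ⟨hY, hα, h.resolve_left hα⟩))

theorem mem_of_meets_last_chain
    (hrule : ∀ j, 1 ≤ j → j ≤ n → ∀ X ∈ S (j - 1),
      TransAlpha S C j X ∨ TransBeta S F C t j X ∨ TransGamma S F C t j X → X ∈ S j)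
    {m : ℕ} (hm : 1 ≤ m) (hmn : m + 1 ≤ n) (ht : 2 ≤ t) (hC : C (m + 1) = ∅)
    {X : Set α} (hX : X ∈ S (m - 1)) (hXC : (X ∩ C m).Nonempty) :
    X ∈ S (m + 1) := by
  have hα : TransAlpha S C m X := ⟨hX, hXC⟩
  have hXm : X ∈ S m := hrule m hm (by omega) X hX (Or.inl hα)
  have hN : 1 ≤ NAlpha S C (m - 1) m X :=
    Finset.card_pos.mpr ⟨m, Finset.mem_filter.mpr ⟨Finset.mem_Ioc.mpr ⟨by omega, le_rfl⟩, hα⟩⟩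
  have hlen : ((m + 1 : ℕ) : ℝ) - ((m - 1 : ℕ) : ℝ) = 2 := by
    rw [Nat.cast_sub hm]
    push_cast
    ring
  have hε : 1 / (2 * (t : ℝ)) * 2 < 1 := by
    have : (2 : ℝ) ≤ t := by exact_mod_cast ht
    rw [div_mul_eq_mul_div, one_mul, div_lt_one (by positivity)]
    linarith
  refine hrule (m + 1) (by omega) hmn X hXm
    (Or.inr (Or.inr ⟨hXm, by simp [hC], by simp [hC], m - 1, by omega, ?_⟩))
  change (NAlpha S C (m - 1) m X : ℝ) > 1 / (2 * (t : ℝ)) * (((m + 1 : ℕ) : ℝ) - ((m - 1 : ℕ) : ℝ))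
  rw [hlen]
  exact hε.trans_le (by exact_mod_cast hN)

variable [LE α] {I : α → Finset ℕ} {s m : ℕ}

theorem forall_mem_chain_exists_mem_succ (hs : 2 ≤ s)
    (hIcons : ∀ x, ∃ a b : ℕ, I x = Finset.Icc a b)
    (hIgap : ∀ x y : α, ¬ x ≤ y → ¬ y ≤ x →
      (I x ∩ I y).Nonempty ∨ (gapBetween (I x : Set ℕ) (I y)).ncard ≤ s - 2)
    {j : ℕ} (hFF : ∀ l, j + 1 < l → l ≤ m → ∀ x ∈ C l, ∃ z ∈ C (j + 1), ¬ x ≤ z ∧ ¬ z ≤ x)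
    {e : ℕ → ℕ} (he : StrictMono e)
    (hSj : ∀ p (hp : p < (S j).length), (S j)[p] = {y | e p ∈ I y})
    (hfriend : ∀ p₁ p₂ : ℕ, p₁ < p₂ → p₂ - p₁ ≤ s - 1 →
      ∀ Y Z : Set α, (S j)[p₁]? = some Y → (S j)[p₂]? = some Z → Y ≠ Z →
        (∃ k < t, F j Y k = some Z) ∧ (∃ k < t, F j Z k = some Y))
    (hsurv : ∀ Y ∈ S j, ((Y ∩ C (j + 1)).Nonempty ∨
      ∃ k < t, ∃ Z, F j Y k = some Z ∧ (Z ∩ C (j + 1)).Nonempty) → Y ∈ S (j + 1))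
    (hcov : ∀ l, j ≤ l → l ≤ m → ∀ x ∈ C l, ∃ Y ∈ S j, x ∈ Y) :
    ∀ l, j + 1 ≤ l → l ≤ m → ∀ x ∈ C l, ∃ Y ∈ S (j + 1), x ∈ Y := by
  intro l hl hlm x hx
  rcases hl.eq_or_lt with rfl | hl
  · obtain ⟨Y, hY, hxY⟩ := hcov (j + 1) (by omega) hlm x hx
    exact ⟨Y, hsurv Y hY (Or.inl ⟨x, hxY, hx⟩), hxY⟩
  obtain ⟨z, hz, hxz, hzx⟩ := hFF l hl hlm x hx
  have hconn : ∀ w, (I w : Set ℕ).OrdConnected := fun w => by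
    obtain ⟨a, b, hab⟩ := hIcons w
    rw [hab, Finset.coe_Icc]
    exact Set.ordConnected_Icc
  have hgap : (gapBetween (I x : Set ℕ) (I z)).ncard + 1 ≤ s - 1 := by
    rcases hIgap x z hxz hzx with hint | hle
    · rw [gapBetween_eq_empty_of_inter_nonempty (by rwa [← Finset.coe_inter, Finset.coe_nonempty]),
        Set.ncard_empty]
      omega
    · omega
  have hmem : ∀ w p (hp : p < (S j).length), w ∈ (S j)[p] ↔ e p ∈ (I w : Set ℕ) := fun w p hp => by
    rw [hSj p hp]
    rfl
  obtain ⟨Y, hY, hxY, hzY⟩ := exists_mem_and_mem_or_friend_mem he (hconn x) (hconn z)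
    (hmem x) (hmem z) hgap hfriend (hcov l (by omega) hlm x hx)
    (hcov (j + 1) (by omega) (by omega) z hz)
  refine ⟨Y, hsurv Y hY ?_, hxY⟩
  rcases hzY with hzY | ⟨k, hk, Z, hF, hzZ⟩
  · exact Or.inl ⟨z, hzY, hz⟩
  · exact Or.inr ⟨k, hk, Z, hF, z, hzZ, hz⟩

theorem forall_mem_chain_exists_mem {q : ℕ} (hs : 2 ≤ s)
    (hIne : ∀ x, (I x).Nonempty) (hIsub : ∀ x, I x ⊆ Finset.Icc 1 q)
    (hIcons : ∀ x, ∃ a b : ℕ, I x = Finset.Icc a b)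
    (hIgap : ∀ x y : α, ¬ x ≤ y → ¬ y ≤ x →
      (I x ∩ I y).Nonempty ∨ (gapBetween (I x : Set ℕ) (I y)).ncard ≤ s - 2)
    (hFF : ∀ i j, 1 ≤ i → i < j → j ≤ m → ∀ x ∈ C j, ∃ z ∈ C i, ¬ x ≤ z ∧ ¬ z ≤ x)
    (hS0 : S 0 = (List.range q).map fun k => {x : α | k + 1 ∈ I x})
    (hsub : ∀ j, j ≤ n → (S j).Sublist (S 0))
    (hrule : ∀ j, 1 ≤ j → j ≤ n → ∀ X ∈ S (j - 1),
      TransAlpha S C j X ∨ TransBeta S F C t j X ∨ TransGamma S F C t j X → X ∈ S j)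
    (hfriend : ∀ j, j ≤ n → ∀ p₁ p₂ : ℕ, p₁ < p₂ → p₂ - p₁ ≤ s - 1 →
      ∀ Y Z : Set α, (S j)[p₁]? = some Y → (S j)[p₂]? = some Z → Y ≠ Z →
        (∃ k < t, F j Y k = some Z) ∧ (∃ k < t, F j Z k = some Y)) :
    ∀ j ≤ m, j ≤ n → ∀ l, j ≤ l → l ≤ m → ∀ x ∈ C l, ∃ Y ∈ S j, x ∈ Y := by
  intro j
  induction j with
  | zero =>
    intro _ _ _ _ _ x _
    obtain ⟨k, hk⟩ := hIne x
    have hk' := Finset.mem_Icc.mp (hIsub x hk)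
    rw [hS0]
    exact exists_mem_map_range hk hk'.1 hk'.2
  | succ j ih =>
    intro hjm hjn
    obtain ⟨f, hf, hSj⟩ := exists_strictMono_of_sublist_map_range (hS0 ▸ hsub j (by omega))
    exact forall_mem_chain_exists_mem_succ hs hIcons hIgap
      (fun l hl hlm x hx => hFF (j + 1) l (by omega) hl hlm x hx) (hf.add_const 1) hSj
      (hfriend j (by omega)) (fun Y hY h => mem_succ_of_mem_or_friend_mem hrule hjn hY h)
      (ih (by omega) (by omega))

end Evolution

theorem evolution_length_ge_general
    {α : Type*} [PartialOrder α] [Nonempty α]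
    (s q m n : ℕ) (t : ℕ) (hs : 2 ≤ s) (ht : t = 2 * (s - 1))
    -- `C 1, …, C m` is a First-Fit chain partition of `P`, and `C j = ∅` for `j > m`
    (C : ℕ → Set α)
    (hCne : ∀ j, 1 ≤ j → j ≤ m → (C j).Nonempty)
    (hCcover : ∀ x : α, ∃ j, 1 ≤ j ∧ j ≤ m ∧ x ∈ C j)
    (hFF : ∀ i j, 1 ≤ i → i < j → j ≤ m → ∀ x ∈ C j, ∃ z ∈ C i, ¬ x ≤ z ∧ ¬ z ≤ x)
    (hCempty : ∀ j, m < j → C j = ∅)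
    -- `I` assigns to each `x ∈ P` a non-empty set `I x ⊆ {1, …, q}` of consecutive
    -- integers with properties (1) and (2) of the structural lemma
    (I : α → Finset ℕ)
    (hIne : ∀ x, (I x).Nonempty)
    (hIsub : ∀ x, I x ⊆ Finset.Icc 1 q)
    (hIcons : ∀ x, ∃ a b : ℕ, I x = Finset.Icc a b)
    (hIgap : ∀ x y : α, ¬ x ≤ y → ¬ y ≤ x →
      (I x ∩ I y).Nonempty ∨
      Set.ncard {k : ℕ |
        ((∀ a ∈ I x, a < k) ∧ (∀ b ∈ I y, k < b)) ∨
        ((∀ b ∈ I y, b < k) ∧ (∀ a ∈ I x, k < a))} ≤ s - 2)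
    -- the evolution `(S 0, F 0), …, (S n, F n)` of `t`-societies
    (S : ℕ → List (Set α)) (F : ℕ → Set α → ℕ → Option (Set α))
    -- `S 0` is the list `X 1, …, X q`, where `X k = {x | k ∈ I x}`
    (hS0 : S 0 = (List.range q).map fun k => {x : α | k + 1 ∈ I x})
    -- each `S j` is a sublist of `S 0` (retaining the order of `S 0`), and the lists decrease
    (hsub : ∀ j, j ≤ n → (S j).Sublist (S 0))
    -- a group of `S (j-1)` belongs to `S j` iff it makes a transition of type α, β or γ
    (hrule : ∀ j, 1 ≤ j → j ≤ n → ∀ X ∈ S (j - 1),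
      (X ∈ S j ↔ TransAlpha S C j X ∨ TransBeta S F C t j X ∨ TransGamma S F C t j X))
    -- distinct groups of `S j` at list-distance at most `s - 1` list each other as friends
    (hfriend : ∀ j, j ≤ n → ∀ p₁ p₂ : ℕ, p₁ < p₂ → p₂ - p₁ ≤ s - 1 →
      ∀ Y Z : Set α, (S j)[p₁]? = some Y → (S j)[p₂]? = some Z → Y ≠ Z →
        (∃ k < t, F j Y k = some Z) ∧ (∃ k < t, F j Z k = some Y))
    -- the evolution ends with the empty society
    (hSn : S n = []) :
    m + 2 ≤ n := by
  have hsurv : ∀ j, 1 ≤ j → j ≤ n → ∀ X ∈ S (j - 1),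
      TransAlpha S C j X ∨ TransBeta S F C t j X ∨ TransGamma S F C t j X → X ∈ S j :=
    fun j hj hjn X hX => (hrule j hj hjn X hX).2
  have hcov := forall_mem_chain_exists_mem hs hIne hIsub hIcons hIgap hFF hS0 hsub hsurv hfriend
  have hm : 1 ≤ m := by
    obtain ⟨j, hj, hjm, -⟩ := hCcover (Classical.arbitrary α)
    omega
  obtain ⟨y, hy⟩ := hCne m hm le_rfl
  by_contra! hn
  rcases le_or_gt n m with hnm | hmn
  · obtain ⟨Y, hY, -⟩ := hcov n hnm le_rfl m hnm le_rfl y hy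
    simp [hSn] at hY
  · obtain ⟨Y, hY, hyY⟩ := hcov (m - 1) (by omega) (by omega) m (by omega) le_rfl y hy
    have hYn := mem_of_meets_last_chain hsurv hm (by omega) (by omega) (hCempty (m + 1) (by omega))
      hY ⟨y, hyY, hy⟩
    rw [show m + 1 = n by omega, hSn] at hYn
    simp at hYn

/-- **Lemma 6 (long evolution).**  With the initial society determined by the interval
function `I`, friendship within list-distance `s - 1`, the `C j` coming from a First-Fit
chain partition extended by empty chains, `P` non-empty, and `S n = ∅`:
the length of the evolution satisfies `n ≥ m + 2`. -/
theorem evolution_length_ge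
    {α : Type*} [PartialOrder α] [Fintype α] [Nonempty α]
    (r s q m n : ℕ) (t : ℕ) (hr : 2 ≤ r) (hs : 2 ≤ s) (ht : t = 2 * (s - 1))
    -- `P` is `(𝐫 + 𝐬)`-free
    (hfree : ¬ ∃ A B : Finset α, A.card = r ∧ B.card = s ∧ Disjoint A B ∧
      IsChain (· ≤ ·) (A : Set α) ∧ IsChain (· ≤ ·) (B : Set α) ∧
      ∀ a ∈ A, ∀ b ∈ B, ¬ a ≤ b ∧ ¬ b ≤ a)
    -- `q` is the height of `P`
    (hq : IsGreatest {k | ∃ c : Finset α, c.card = k ∧ IsChain (· ≤ ·) (c : Set α)} q)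
    -- `C 1, …, C m` is a First-Fit chain partition of `P`, and `C j = ∅` for `j > m`
    (C : ℕ → Set α)
    (hCne : ∀ j, 1 ≤ j → j ≤ m → (C j).Nonempty)
    (hCchain : ∀ j, 1 ≤ j → j ≤ m → IsChain (· ≤ ·) (C j))
    (hCdisj : ∀ i j, 1 ≤ i → j ≤ m → i ≠ j → Disjoint (C i) (C j))
    (hCcover : ∀ x : α, ∃ j, 1 ≤ j ∧ j ≤ m ∧ x ∈ C j)
    (hFF : ∀ i j, 1 ≤ i → i < j → j ≤ m → ∀ x ∈ C j, ∃ z ∈ C i, ¬ x ≤ z ∧ ¬ z ≤ x)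
    (hCempty : ∀ j, m < j → C j = ∅)
    -- `I` assigns to each `x ∈ P` a non-empty set `I x ⊆ {1, …, q}` of consecutive
    -- integers with properties (1) and (2) of the structural lemma
    (I : α → Finset ℕ)
    (hIne : ∀ x, (I x).Nonempty)
    (hIsub : ∀ x, I x ⊆ Finset.Icc 1 q)
    (hIcons : ∀ x, ∃ a b : ℕ, I x = Finset.Icc a b)
    (hIheight : ∀ k : ℕ, ∀ c : Finset α, (∀ x ∈ c, k ∈ I x) →
      IsChain (· ≤ ·) (c : Set α) → c.card ≤ r - 1)
    (hIgap : ∀ x y : α, ¬ x ≤ y → ¬ y ≤ x →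
      (I x ∩ I y).Nonempty ∨
      Set.ncard {k : ℕ |
        ((∀ a ∈ I x, a < k) ∧ (∀ b ∈ I y, k < b)) ∨
        ((∀ b ∈ I y, b < k) ∧ (∀ a ∈ I x, k < a))} ≤ s - 2)
    -- the evolution `(S 0, F 0), …, (S n, F n)` of `t`-societies
    (S : ℕ → List (Set α)) (F : ℕ → Set α → ℕ → Option (Set α))
    -- `S 0` is the list `X 1, …, X q`, where `X k = {x | k ∈ I x}`
    (hS0 : S 0 = (List.range q).map fun k => {x : α | k + 1 ∈ I x})
    -- each `S j` is a sublist of `S 0` (retaining the order of `S 0`), and the lists decrease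
    (hsub : ∀ j, j ≤ n → (S j).Sublist (S 0))
    (hmono : ∀ j, 1 ≤ j → j ≤ n → (S j).Sublist (S (j - 1)))
    -- a group of `S (j-1)` belongs to `S j` iff it makes a transition of type α, β or γ
    (hrule : ∀ j, 1 ≤ j → j ≤ n → ∀ X ∈ S (j - 1),
      (X ∈ S j ↔ TransAlpha S C j X ∨ TransBeta S F C t j X ∨ TransGamma S F C t j X))
    -- distinct groups of `S j` at list-distance at most `s - 1` list each other as friends
    (hfriend : ∀ j, j ≤ n → ∀ p₁ p₂ : ℕ, p₁ < p₂ → p₂ - p₁ ≤ s - 1 →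
      ∀ Y Z : Set α, (S j)[p₁]? = some Y → (S j)[p₂]? = some Z → Y ≠ Z →
        (∃ k < t, F j Y k = some Z) ∧ (∃ k < t, F j Z k = some Y))
    -- the evolution ends with the empty society
    (hSn : S n = []) :
    m + 2 ≤ n :=
  evolution_length_ge_general s q m n t hs ht C hCne hCcover hFF hCempty I hIne hIsub hIcons hIgap S
    F hS0 hsub hrule hfriend hSn
end
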